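/- arXiv:1312.5255 — 3 statements merged into one kernel-verified Lean document; each statement's English description precedes it below -/
import Mathlib

section
/- There exists a constant C > 0, depending only on the dimension d, such that for every weight v on ℝ^d which is not almost everywhere zero and every measurable set E ⊆ ℝ^d one has (∫ |M(χ_E v)(x)/Mv(x)|² v(x) dx)^{1/2} ≤ C v(E)^{1/2}, where the quotient M(χ_E v)/Mv is interpreted as 0 at points where v vanishes outside the closed support of v (note Mv(x) > 0 for every x when v is not a.e. zero). -/
open MeasureTheory Filter Set Metric
open scoped ENNReal Topology NNReal

noncomputable section

/-- The closed axis-parallel cube centered at `c` with half-edge `r` in `ℝ^d`. -/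
def cube {d : ℕ} (c : EuclideanSpace ℝ (Fin d)) (r : ℝ) : Set (EuclideanSpace ℝ (Fin d)) :=
  {y | ∀ i, |y i - c i| ≤ r}

/-- The non-centered Hardy–Littlewood maximal function over axis-parallel cubes,
with values in `ℝ≥0∞`. -/
def maximal {d : ℕ} (f : EuclideanSpace ℝ (Fin d) → ℝ) (x : EuclideanSpace ℝ (Fin d)) : ℝ≥0∞ :=
  ⨆ (c : EuclideanSpace ℝ (Fin d)) (r : ℝ) (_ : 0 < r) (_ : x ∈ cube c r),
    (∫⁻ y in cube c r, (‖f y‖₊ : ℝ≥0∞)) / volume (cube c r)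

/-- The centered Hardy–Littlewood maximal function over axis-parallel cubes. -/
def cmaximal {d : ℕ} (f : EuclideanSpace ℝ (Fin d) → ℝ) (x : EuclideanSpace ℝ (Fin d)) : ℝ≥0∞ :=
  ⨆ (r : ℝ) (_ : 0 < r),
    (∫⁻ y in cube x r, (‖f y‖₊ : ℝ≥0∞)) / volume (cube x r)

/-! Let `ν = v dx` and `g = M(χ_E v) / Mv ≤ 1`. If `λ Mv(x) < M(χ_E v)(x)`, a cube `Q ∋ x`
witnessing this lies in the ball `B` centred at `x` of radius `2√d` times its half-edge, and `B`
lies in a cube of volume `(2√d)^d |Q|`, so `λ ν(B) ≤ (2√d)^d ν(E ∩ B)`. The Besicovitch covering theorem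
sorts these centred balls into `N` disjoint families, whence the weak-type bound
`ν{g > λ} ≤ N (2√d)^d ν(E) / λ`. Since `g ≤ 1`, the layer-cake formula
`∫ g² dν = 2 ∫₀¹ λ ν{g > λ} dλ` turns it into `∫ g² dν ≤ 2 N (2√d)^d ν(E)`. -/

section Covering

variable {α : Type*} [MeasurableSpace α]

theorem setLIntegral_nnnorm_indicator {F : Type*} [NormedAddCommGroup F] {μ : Measure α}
    {f : α → F} {E : Set α} (hE : MeasurableSet E) (s : Set α) :
    ∫⁻ y in s, (‖E.indicator f y‖₊ : ℝ≥0∞) ∂μ = ∫⁻ y in E ∩ s, (‖f y‖₊ : ℝ≥0∞) ∂μ := by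
  simp_rw [nnnorm_indicator_eq_indicator_nnnorm, ENNReal.coe_indicator]
  exact setLIntegral_indicator hE _

theorem measure_biUnion_le_mul_of_le_mul_inter {ι : Type*} {μ : Measure α} {s : ι → Set α}
    {u : Set ι} (hu : u.Countable) (hdisj : u.PairwiseDisjoint s)
    (hs : ∀ j ∈ u, MeasurableSet (s j)) {E : Set α} (hE : MeasurableSet E) {K : ℝ≥0∞}
    (hK : ∀ j ∈ u, μ (s j) ≤ K * μ (E ∩ s j)) :
    μ (⋃ j ∈ u, s j) ≤ K * μ E :=
  calc μ (⋃ j ∈ u, s j) ≤ ∑' j : u, μ (s j) := measure_biUnion_le μ hu s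
    _ ≤ ∑' j : u, K * μ (E ∩ s j) := ENNReal.tsum_le_tsum fun j => hK j j.2
    _ = K * μ (⋃ j ∈ u, E ∩ s j) := by
      rw [ENNReal.tsum_mul_left, measure_biUnion hu (hdisj.mono fun j => inter_subset_right)
        fun j hj => hE.inter (hs j hj)]
    _ ≤ K * μ E := by gcongr; exact iUnion₂_subset fun j _ => inter_subset_left

variable [MetricSpace α] [SecondCountableTopology α] [OpensMeasurableSpace α] {N : ℕ} {τ : ℝ}
  {μ : Measure α} {S E : Set α} {K : ℝ≥0∞}

theorem Besicovitch.measure_le_of_forall_closedBall_le_of_subset_ball (hτ : 1 < τ)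
    (hN : IsEmpty (SatelliteConfig α N τ)) (hE : MeasurableSet E) {r : α → ℝ}
    (hr : ∀ x ∈ S, 0 < r x)
    (hK : ∀ x ∈ S, μ (closedBall x (r x)) ≤ K * μ (E ∩ closedBall x (r x)))
    {x₀ : α} {R : ℝ} (hS : S ⊆ ball x₀ R) :
    μ S ≤ N * K * μ E := by
  by_cases hlarge : ∃ x ∈ S, 2 * R ≤ r x
  · obtain ⟨x, hx, hRx⟩ := hlarge
    have hN₁ : (1 : ℝ≥0∞) ≤ N := by
      have : Inhabited α := ⟨x⟩
      rcases N with _ | N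
      · exact (hN.false default).elim
      · exact_mod_cast N.succ_pos
    have hSx : S ⊆ closedBall x (r x) := fun y hy => mem_closedBall.2 <| by
      linarith [dist_triangle_right y x x₀, mem_ball.1 (hS hy), mem_ball.1 (hS hx)]
    calc μ S ≤ μ (closedBall x (r x)) := measure_mono hSx
      _ ≤ K * μ (E ∩ closedBall x (r x)) := hK x hx
      _ ≤ 1 * K * μ E := by rw [one_mul]; gcongr; exact inter_subset_left
      _ ≤ N * K * μ E := by gcongr
  · push Not at hlarge
    let p : BallPackage S α :=
      { c := (↑), r := fun x => r x, rpos := fun x => hr x x.2, r_bound := 2 * R,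
        r_le := fun x => (hlarge x x.2).le }
    obtain ⟨u, hu, hcover⟩ := exist_disjoint_covering_families hτ hN p
    have hSu : S ⊆ ⋃ i, ⋃ j ∈ u i, closedBall (p.c j) (p.r j) := fun x hx =>
      iUnion_mono (fun i => iUnion₂_mono fun j _ => ball_subset_closedBall) (hcover ⟨⟨x, hx⟩, rfl⟩)
    calc μ S ≤ ∑ i, μ (⋃ j ∈ u i, closedBall (p.c j) (p.r j)) :=
          (measure_mono hSu).trans (measure_iUnion_fintype_le _ _)
      _ ≤ ∑ _i : Fin N, K * μ E := by
          refine Finset.sum_le_sum fun i _ => measure_biUnion_le_mul_of_le_mul_inter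
            ((hu i).countable_of_nonempty_interior fun j _ => ?_) (hu i)
            (fun _ _ => measurableSet_closedBall) hE fun j _ => hK j j.2
          exact (nonempty_ball.2 (p.rpos j)).mono ball_subset_interior_closedBall
      _ = N * K * μ E := by simp [mul_assoc]

theorem Besicovitch.measure_le_of_forall_closedBall_le (hτ : 1 < τ)
    (hN : IsEmpty (SatelliteConfig α N τ)) (hE : MeasurableSet E)
    (h : ∀ x ∈ S, ∃ r > 0, μ (closedBall x r) ≤ K * μ (E ∩ closedBall x r)) :
    μ S ≤ N * K * μ E := by
  choose! r hr hK using h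
  rcases S.eq_empty_or_nonempty with rfl | ⟨x₀, -⟩
  · simp
  have hS : S = ⋃ n : ℕ, S ∩ ball x₀ n := by rw [← inter_iUnion, iUnion_ball_nat, inter_univ]
  rw [hS, Monotone.measure_iUnion fun m n hmn =>
    inter_subset_inter_right _ (ball_subset_ball (by exact_mod_cast hmn))]
  exact iSup_le fun n => measure_le_of_forall_closedBall_le_of_subset_ball hτ hN hE
    (fun x hx => hr x hx.1) (fun x hx => hK x hx.1) inter_subset_right

end Covering

theorem lintegral_sq_le_of_meas_lt_le {α : Type*} [MeasurableSpace α] {μ : Measure α}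
    {f : α → ℝ≥0∞} (hf : AEMeasurable f μ) (hf1 : ∀ x, f x ≤ 1) {B : ℝ≥0∞}
    (hB : ∀ l, l ≠ 0 → l ≠ ∞ → μ {x | l < f x} ≤ B / l) :
    ∫⁻ x, f x ^ 2 ∂μ ≤ 2 * B := by
  have hfin : ∀ x, f x ≠ ∞ := fun x => ((hf1 x).trans_lt ENNReal.one_lt_top).ne
  have hsq : ∀ x, f x ^ 2 = ENNReal.ofReal ((f x).toReal ^ (2 : ℝ)) := fun x => by
    rw [Real.rpow_two, ENNReal.ofReal_pow ENNReal.toReal_nonneg, ENNReal.ofReal_toReal (hfin x)]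
  simp_rw [hsq]
  rw [lintegral_rpow_eq_lintegral_meas_lt_mul μ (ae_of_all _ fun _ => ENNReal.toReal_nonneg)
    hf.ennreal_toReal two_pos]
  have hlevel : ∀ t ∈ Ioi (0 : ℝ),
      μ {x | t < (f x).toReal} * ENNReal.ofReal (t ^ ((2 : ℝ) - 1)) ≤
        (Iio 1).indicator (fun _ => B) t := by
    intro t ht
    rw [show (2 : ℝ) - 1 = 1 by norm_num, Real.rpow_one]
    rcases lt_or_ge t 1 with ht1 | ht1
    · have hset : {x | t < (f x).toReal} = {x | ENNReal.ofReal t < f x} := by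
        ext x; simp [ENNReal.ofReal_lt_iff_lt_toReal (le_of_lt ht) (hfin x)]
      rw [indicator_of_mem (mem_Iio.2 ht1), hset]
      calc μ {x | ENNReal.ofReal t < f x} * ENNReal.ofReal t
          ≤ B / ENNReal.ofReal t * ENNReal.ofReal t := by
            gcongr; exact hB _ (ENNReal.ofReal_pos.2 ht).ne' ENNReal.ofReal_ne_top
        _ ≤ B := by rw [mul_comm]; exact ENNReal.mul_div_le
    · have hset : {x | t < (f x).toReal} = ∅ := eq_empty_of_forall_notMem fun x hx =>
        (ht1.trans_lt hx).not_ge (ENNReal.toReal_le_of_le_ofReal zero_le_one (by simpa using hf1 x))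
      simp [hset]
  calc ENNReal.ofReal 2 *
        ∫⁻ t in Ioi 0, μ {x | t < (f x).toReal} * ENNReal.ofReal (t ^ ((2 : ℝ) - 1))
      ≤ ENNReal.ofReal 2 * ∫⁻ t : ℝ in Ioi 0, (Iio 1).indicator (fun _ => B) t := by
        gcongr ENNReal.ofReal 2 * ?_; exact setLIntegral_mono' measurableSet_Ioi hlevel
    _ = 2 * B := by
        rw [lintegral_indicator_const measurableSet_Iio, Measure.restrict_apply measurableSet_Iio,
          Iio_inter_Ioi, Real.volume_Ioo]
        norm_num

section Maximal

variable {d : ℕ}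

theorem mem_cube_self (c : EuclideanSpace ℝ (Fin d)) {r : ℝ} (hr : 0 ≤ r) : c ∈ cube c r :=
  fun i => by simpa using hr

theorem volume_cube (c : EuclideanSpace ℝ (Fin d)) {r : ℝ} (hr : 0 ≤ r) :
    volume (cube c r) = ENNReal.ofReal (2 * r) ^ d := by
  have hpre : cube c r = WithLp.ofLp ⁻¹' univ.pi fun i => Icc (c i - r) (c i + r) := by
    ext y
    simp only [cube, mem_ofPred_eq, mem_preimage, mem_univ_pi, mem_Icc, abs_le]
    exact forall_congr' fun i => by constructor <;> intro h <;> constructor <;> linarith [h.1, h.2]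
  rw [hpre, (PiLp.volume_preserving_ofLp (Fin d)).measure_preimage
    (MeasurableSet.univ_pi fun i => measurableSet_Icc).nullMeasurableSet, volume_pi_pi]
  simp [Real.volume_Icc, two_mul, ENNReal.ofReal_add hr hr]

theorem volume_cube_mul (x c : EuclideanSpace ℝ (Fin d)) {s r : ℝ} (hs : 0 ≤ s) (hr : 0 ≤ r) :
    volume (cube x (s * r)) = ENNReal.ofReal s ^ d * volume (cube c r) := by
  rw [volume_cube x (mul_nonneg hs hr), volume_cube c hr, ← mul_pow, ← ENNReal.ofReal_mul hs]
  ring_nf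

theorem volume_cube_ne_zero (c : EuclideanSpace ℝ (Fin d)) {r : ℝ} (hr : 0 < r) :
    volume (cube c r) ≠ 0 := by
  rw [volume_cube c hr.le]; positivity

theorem volume_cube_ne_top (c : EuclideanSpace ℝ (Fin d)) {r : ℝ} (hr : 0 ≤ r) :
    volume (cube c r) ≠ ∞ := by
  rw [volume_cube c hr]; exact ENNReal.pow_ne_top ENNReal.ofReal_ne_top

theorem closedBall_subset_cube (x : EuclideanSpace ℝ (Fin d)) (r : ℝ) :
    closedBall x r ⊆ cube x r := fun y hy i =>
  (PiLp.dist_apply_le y x i).trans (mem_closedBall.1 hy)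

theorem cube_subset_closedBall (x : EuclideanSpace ℝ (Fin d)) {r : ℝ} (hr : 0 ≤ r) :
    cube x r ⊆ closedBall x (r * √d) := fun y hy => by
  have hsum : ∑ i, dist (y i) (x i) ^ 2 ≤ ∑ _i : Fin d, r ^ 2 :=
    Finset.sum_le_sum fun i _ => pow_le_pow_left₀ dist_nonneg (hy i) 2
  rw [mem_closedBall, EuclideanSpace.dist_eq]
  calc √(∑ i, dist (y i) (x i) ^ 2) ≤ √(∑ _i : Fin d, r ^ 2) := Real.sqrt_le_sqrt hsum
    _ = r * √d := by simp [Real.sqrt_sq hr, mul_comm]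

theorem cube_subset_cube_of_mem {c x : EuclideanSpace ℝ (Fin d)} {r : ℝ} (hx : x ∈ cube c r) :
    cube c r ⊆ cube x (2 * r) := fun y hy i => by
  linarith [abs_sub_le (y i) (c i) (x i), abs_sub_comm (c i) (x i), hy i, hx i]

theorem le_maximal (f : EuclideanSpace ℝ (Fin d) → ℝ) {x c : EuclideanSpace ℝ (Fin d)} {r : ℝ}
    (hr : 0 < r) (hx : x ∈ cube c r) :
    (∫⁻ y in cube c r, (‖f y‖₊ : ℝ≥0∞)) / volume (cube c r) ≤ maximal f x :=
  le_iSup₂_of_le c r <| le_iSup₂_of_le (f := fun _ _ => _) hr hx le_rfl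

theorem exists_lt_of_lt_maximal {f : EuclideanSpace ℝ (Fin d) → ℝ} {x : EuclideanSpace ℝ (Fin d)}
    {a : ℝ≥0∞} (h : a < maximal f x) :
    ∃ c r, 0 < r ∧ x ∈ cube c r ∧
      a < (∫⁻ y in cube c r, (‖f y‖₊ : ℝ≥0∞)) / volume (cube c r) := by
  simpa only [maximal, lt_iSup_iff, exists_prop] using h

theorem maximal_indicator_le (f : EuclideanSpace ℝ (Fin d) → ℝ) (E : Set (EuclideanSpace ℝ (Fin d)))
    (x : EuclideanSpace ℝ (Fin d)) : maximal (E.indicator f) x ≤ maximal f x := by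
  refine iSup₂_mono fun c r => iSup₂_mono fun _ _ => ?_
  gcongr with y
  exact norm_indicator_le_norm_self f y

theorem lowerSemicontinuous_maximal (f : EuclideanSpace ℝ (Fin d) → ℝ) :
    LowerSemicontinuous (maximal f) := by
  intro x a ha
  obtain ⟨c, r, hr, hx, hlt⟩ := exists_lt_of_lt_maximal ha
  have hcont : Continuous fun s : ℝ => a * ENNReal.ofReal s ^ d :=
    (ENNReal.continuous_const_mul (ha.trans_le le_top).ne).comp
      ((ENNReal.continuous_pow d).comp ENNReal.continuous_ofReal)
  have hlim : Tendsto (fun s : ℝ => a * ENNReal.ofReal s ^ d) (𝓝[>] 1) (𝓝 a) := by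
    simpa using (hcont.tendsto 1).mono_left nhdsWithin_le_nhds
  -- enlarging the cube by a factor `s` divides the average by at most `s ^ d`
  obtain ⟨s, hs, hs1⟩ := ((hlim.eventually (gt_mem_nhds hlt)).and self_mem_nhdsWithin).exists
  have hs0 : 0 < s := zero_lt_one.trans hs1
  filter_upwards [ball_mem_nhds x (by nlinarith : 0 < (s - 1) * r)] with y hy
  have hyc : y ∈ cube c (s * r) := fun i => by
    linarith [abs_sub_le (y i) (x i) (c i), PiLp.dist_apply_le y x i, mem_ball.1 hy, hx i,
      Real.dist_eq (y i) (x i)]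
  calc a < (∫⁻ z in cube c r, (‖f z‖₊ : ℝ≥0∞)) / volume (cube c (s * r)) := by
        rw [ENNReal.lt_div_iff_mul_lt (Or.inl (volume_cube_ne_zero c (mul_pos hs0 hr)))
          (Or.inl (volume_cube_ne_top c (by positivity))), volume_cube_mul c c hs0.le hr.le,
          ← mul_assoc]
        exact ENNReal.mul_lt_of_lt_div hs
    _ ≤ (∫⁻ z in cube c (s * r), (‖f z‖₊ : ℝ≥0∞)) / volume (cube c (s * r)) := by
        gcongr; exact fun z hz i => (hz i).trans (by nlinarith)
    _ ≤ maximal f y := le_maximal f (mul_pos hs0 hr) hyc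

theorem measurable_maximal (f : EuclideanSpace ℝ (Fin d) → ℝ) : Measurable (maximal f) :=
  (lowerSemicontinuous_maximal f).measurable

theorem exists_closedBall_mul_le_of_mul_maximal_lt (hd : 1 ≤ d)
    {v : EuclideanSpace ℝ (Fin d) → ℝ} {E : Set (EuclideanSpace ℝ (Fin d))} (hE : MeasurableSet E)
    {l : ℝ≥0∞} {x : EuclideanSpace ℝ (Fin d)} (hx : l * maximal v x < maximal (E.indicator v) x) :
    ∃ t > 0, l * (volume.withDensity fun y => (‖v y‖₊ : ℝ≥0∞)) (closedBall x t) ≤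
      ENNReal.ofReal (2 * √d) ^ d *
        (volume.withDensity fun y => (‖v y‖₊ : ℝ≥0∞)) (E ∩ closedBall x t) := by
  obtain ⟨c, r, hr, hxc, hlt⟩ := exists_lt_of_lt_maximal hx
  have hs : 0 < 2 * √d := by have : 0 < √d := Real.sqrt_pos.2 (by exact_mod_cast hd); positivity
  set t := 2 * √d * r with ht_def
  have ht : 0 < t := mul_pos hs hr
  have hQB : cube c r ⊆ closedBall x t :=
    (cube_subset_cube_of_mem hxc).trans <| (cube_subset_closedBall x (by positivity)).trans_eq
      (by rw [ht_def]; ring_nf)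
  have hball : (volume.withDensity fun y => (‖v y‖₊ : ℝ≥0∞)) (closedBall x t) ≤
      maximal v x * volume (cube x t) := by
    rw [withDensity_apply _ measurableSet_closedBall,
      ← ENNReal.div_le_iff (volume_cube_ne_zero x ht) (volume_cube_ne_top x ht.le)]
    exact le_trans (by gcongr; exact closedBall_subset_cube x t)
      (le_maximal v ht (mem_cube_self x ht.le))
  have hcube : l * maximal v x * volume (cube c r) ≤
      (volume.withDensity fun y => (‖v y‖₊ : ℝ≥0∞)) (E ∩ closedBall x t) := by
    rw [withDensity_apply _ (hE.inter measurableSet_closedBall),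
      ← setLIntegral_nnnorm_indicator hE]
    exact (ENNReal.mul_lt_of_lt_div hlt).le.trans (lintegral_mono_set hQB)
  refine ⟨t, ht, ?_⟩
  calc l * (volume.withDensity fun y => (‖v y‖₊ : ℝ≥0∞)) (closedBall x t)
      ≤ l * (maximal v x * (ENNReal.ofReal (2 * √d) ^ d * volume (cube c r))) := by
        rw [← volume_cube_mul x c hs.le hr.le]; gcongr
    _ = ENNReal.ofReal (2 * √d) ^ d * (l * maximal v x * volume (cube c r)) := by ring
    _ ≤ _ := by gcongr

theorem withDensity_setOf_mul_maximal_lt_le (hd : 1 ≤ d) {N : ℕ} {τ : ℝ} (hτ : 1 < τ)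
    (hN : IsEmpty (Besicovitch.SatelliteConfig (EuclideanSpace ℝ (Fin d)) N τ))
    (v : EuclideanSpace ℝ (Fin d) → ℝ) {E : Set (EuclideanSpace ℝ (Fin d))} (hE : MeasurableSet E)
    {l : ℝ≥0∞} (hl₀ : l ≠ 0) (hl : l ≠ ∞) :
    (volume.withDensity fun y => (‖v y‖₊ : ℝ≥0∞))
        {x | l * maximal v x < maximal (E.indicator v) x} ≤
      N * ENNReal.ofReal (2 * √d) ^ d *
        (volume.withDensity fun y => (‖v y‖₊ : ℝ≥0∞)) E / l := by
  refine (Besicovitch.measure_le_of_forall_closedBall_le hτ hN hE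
    (K := ENNReal.ofReal (2 * √d) ^ d / l) fun x hx => ?_).trans_eq
      (by simp only [div_eq_mul_inv]; ring)
  obtain ⟨t, ht, hball⟩ := exists_closedBall_mul_le_of_mul_maximal_lt hd hE hx
  refine ⟨t, ht, ?_⟩
  rw [← ENNReal.mul_div_right_comm, ENNReal.le_div_iff_mul_le (Or.inl hl₀) (Or.inl hl), mul_comm]
  exact hball

theorem lintegral_sq_maximal_indicator_div_maximal_mul_le (hd : 1 ≤ d) {N : ℕ} {τ : ℝ}
    (hτ : 1 < τ) (hN : IsEmpty (Besicovitch.SatelliteConfig (EuclideanSpace ℝ (Fin d)) N τ))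
    {v : EuclideanSpace ℝ (Fin d) → ℝ} (hv : 0 ≤ v) (hv_meas : AEMeasurable v)
    {E : Set (EuclideanSpace ℝ (Fin d))} (hE : MeasurableSet E) :
    ∫⁻ x, (maximal (E.indicator v) x / maximal v x) ^ 2 * ENNReal.ofReal (v x) ≤
      2 * (N * ENNReal.ofReal (2 * √d) ^ d * ∫⁻ x in E, ENNReal.ofReal (v x)) := by
  have hdens : (fun y => ENNReal.ofReal (v y)) = fun y => (‖v y‖₊ : ℝ≥0∞) :=
    funext fun y => (Real.enorm_eq_ofReal (hv y)).symm
  have hg : Measurable fun x => maximal (E.indicator v) x / maximal v x :=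
    (measurable_maximal _).div (measurable_maximal _)
  have hweak := lintegral_sq_le_of_meas_lt_le hg.aemeasurable
    (fun x => ENNReal.div_le_of_le_mul (by rw [one_mul]; exact maximal_indicator_le v E x))
    fun l hl₀ hl => le_trans (measure_mono fun x hx => ENNReal.mul_lt_of_lt_div hx)
      (withDensity_setOf_mul_maximal_lt_le hd hτ hN v hE hl₀ hl)
  rw [← hdens, lintegral_withDensity_eq_lintegral_mul₀' hv_meas.ennreal_ofReal
    (hg.pow_const 2).aemeasurable, withDensity_apply _ hE] at hweak
  simpa only [Pi.mul_apply, mul_comm (ENNReal.ofReal _)] using hweak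

end Maximal

/-- **Lemma.** There is a dimensional constant `C > 0` such that for every weight `v`
(not a.e. zero) and every measurable set `E`,
`(∫ (M(χ_E v)/Mv)² v)^{1/2} ≤ C v(E)^{1/2}`. -/
theorem lintegral_maximal_indicator_div_maximal_le
    (d : ℕ) (hd : 1 ≤ d) :
    ∃ C : ℝ, 0 < C ∧
      ∀ v : EuclideanSpace ℝ (Fin d) → ℝ, 0 ≤ v → LocallyIntegrable v volume →
        ¬ (v =ᵐ[volume] 0) →
        ∀ E : Set (EuclideanSpace ℝ (Fin d)), MeasurableSet E →
        (∫⁻ x, (maximal (E.indicator v) x / maximal v x) ^ 2 * ENNReal.ofReal (v x))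
            ^ (1/2 : ℝ)
          ≤ ENNReal.ofReal C * (∫⁻ x in E, ENNReal.ofReal (v x)) ^ (1/2 : ℝ) := by
  obtain ⟨N, τ, hτ, hN⟩ :=
    HasBesicovitchCovering.no_satelliteConfig (α := EuclideanSpace ℝ (Fin d))
  have hN₀ : 0 < N := Nat.pos_of_ne_zero (by rintro rfl; exact hN.false default)
  have hd₀ : 0 < √d := Real.sqrt_pos.2 (by exact_mod_cast hd)
  refine ⟨√(2 * (N * (2 * √d) ^ d)), by positivity, fun v hv hv_int _ E hE => ?_⟩
  have hconst : ENNReal.ofReal (2 * (N * (2 * √d) ^ d)) =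
      2 * (N * ENNReal.ofReal (2 * √d) ^ d) := by
    rw [ENNReal.ofReal_mul zero_le_two, ENNReal.ofReal_mul (Nat.cast_nonneg N),
      ENNReal.ofReal_pow (by positivity), ENNReal.ofReal_natCast, ENNReal.ofReal_ofNat]
  rw [Real.sqrt_eq_rpow, ← ENNReal.ofReal_rpow_of_nonneg (by positivity) (by norm_num),
    ← ENNReal.mul_rpow_of_nonneg _ _ (by norm_num), hconst, ← mul_assoc]
  refine ENNReal.rpow_le_rpow ((lintegral_sq_maximal_indicator_div_maximal_mul_le hd hτ hN hv
    hv_int.aestronglyMeasurable.aemeasurable hE).trans_eq (by ring)) (by norm_num)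
end
end

section
/- There exists a constant b_d > 0, depending only on the dimension d (a Besicovitch covering constant), such that for every weight v on ℝ^d which is not almost everywhere zero, every f ∈ L¹(v), and every λ > 0, one has v({x ∈ ℝ^d : M̃(fv)(x) > λ M̃v(x)}) ≤ (b_d/λ) ∫ |f(x)| v(x) dx. (When v is not a.e. zero, M̃v(x) > 0 for every x, so the quotient M̃(fv)/M̃v is everywhere defined.) -/
/-!
Let `ν = v · dx`. If `M̃(fv)(x) > λ M̃v(x)`, some cube `Q` centred at `x` has
`λ ν(Q) < ∫_Q |f| dν`. Centred cubes are the closed balls of the sup metric on `ℝ^d`, which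
has the Besicovitch covering property: the balls attached to the points of the level set can be
sorted into `N = N(d)` subfamilies of pairwise disjoint balls that together cover it. Summing
the inequality over each subfamily gives `λ ν(level set) ≤ N ∫ |f| dν`, whatever the weight `v`.
-/

open MeasureTheory Filter Set Metric
open scoped ENNReal Topology NNReal

noncomputable section

section Lintegral

variable {α : Type*} [MeasurableSpace α] {μ : Measure α} {g : α → ℝ≥0∞} {L : ℝ≥0∞}

theorem mul_measure_biUnion_le_lintegral {ι : Type*} {t : Set ι} {B : ι → Set α}
    (ht : t.Countable) (hB : ∀ j ∈ t, MeasurableSet (B j)) (hd : t.PairwiseDisjoint B)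
    (h : ∀ j ∈ t, L * μ (B j) ≤ ∫⁻ y in B j, g y ∂μ) :
    L * μ (⋃ j ∈ t, B j) ≤ ∫⁻ y, g y ∂μ :=
  calc L * μ (⋃ j ∈ t, B j) ≤ L * ∑' j : t, μ (B j) := by
        gcongr; exact measure_biUnion_le μ ht B
    _ = ∑' j : t, L * μ (B j) := ENNReal.tsum_mul_left.symm
    _ ≤ ∑' j : t, ∫⁻ y in B j, g y ∂μ := ENNReal.tsum_le_tsum fun j => h j j.2
    _ = ∫⁻ y in ⋃ j ∈ t, B j, g y ∂μ := (lintegral_biUnion ht hB hd g).symm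
    _ ≤ ∫⁻ y, g y ∂μ := setLIntegral_le_lintegral _ _

end Lintegral

namespace Besicovitch

variable {α : Type*} [MetricSpace α] [SecondCountableTopology α] [MeasurableSpace α]
  [OpensMeasurableSpace α] {N : ℕ} {τ : ℝ} {μ : Measure α} {g : α → ℝ≥0∞} {L : ℝ≥0∞}
  {s : Set α}

theorem mul_measure_le_of_forall_closedBall_of_le (hτ : 1 < τ)
    (hN : IsEmpty (SatelliteConfig α N τ)) {r : α → ℝ} {R : ℝ}
    (hs : ∀ x ∈ s, 0 < r x ∧ r x ≤ R ∧
      L * μ (closedBall x (r x)) ≤ ∫⁻ y in closedBall x (r x), g y ∂μ) :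
    L * μ s ≤ N * ∫⁻ y, g y ∂μ := by
  let q : BallPackage s α :=
    { c := (↑), r := fun x => r x, rpos := fun x => (hs x x.2).1, r_bound := R,
      r_le := fun x => (hs x x.2).2.1 }
  obtain ⟨t, ht_disj, ht_cover⟩ := exist_disjoint_covering_families hτ hN q
  have hs_sub : s ⊆ ⋃ i, ⋃ j ∈ t i, closedBall (q.c j) (q.r j) := fun x hx => by
    have := ht_cover ⟨⟨x, hx⟩, rfl⟩
    simp only [mem_iUnion] at this ⊢
    obtain ⟨i, j, hj, hxj⟩ := this
    exact ⟨i, j, hj, ball_subset_closedBall hxj⟩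
  calc L * μ s ≤ L * ∑ i, μ (⋃ j ∈ t i, closedBall (q.c j) (q.r j)) := by
        gcongr; exact (measure_mono hs_sub).trans (measure_iUnion_fintype_le _ _)
    _ = ∑ i, L * μ (⋃ j ∈ t i, closedBall (q.c j) (q.r j)) := Finset.mul_sum _ _ _
    _ ≤ ∑ _i : Fin N, ∫⁻ y, g y ∂μ := by
        gcongr with i
        refine mul_measure_biUnion_le_lintegral ?_ (fun _ _ => measurableSet_closedBall)
          (ht_disj i) fun j _ => (hs j j.2).2.2
        exact (ht_disj i).countable_of_nonempty_interior fun j _ =>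
          ⟨j, ball_subset_interior_closedBall (mem_ball_self (q.rpos j))⟩
    _ = N * ∫⁻ y, g y ∂μ := by simp

theorem mul_measure_le_of_forall_closedBall (hτ : 1 < τ)
    (hN : IsEmpty (SatelliteConfig α N τ))
    (hs : ∀ x ∈ s, ∃ r > 0,
      L * μ (closedBall x r) ≤ ∫⁻ y in closedBall x r, g y ∂μ) :
    L * μ s ≤ N * ∫⁻ y, g y ∂μ := by
  -- A `BallPackage` needs a uniform bound on the radii, so exhaust `s` by `{r ≤ n}`.
  choose! r hr_pos hr using hs
  let S : ℕ → Set α := fun n => {x ∈ s | r x ≤ n}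
  have hS : Monotone S := fun m n hmn x hx => ⟨hx.1, hx.2.trans (Nat.cast_le.2 hmn)⟩
  have hs_eq : s = ⋃ n, S n := Subset.antisymm
    (fun x hx => mem_iUnion.2 ((exists_nat_ge (r x)).imp fun _ hn => ⟨hx, hn⟩))
    (iUnion_subset fun _ _ hx => hx.1)
  rw [hs_eq, hS.measure_iUnion, ENNReal.mul_iSup]
  exact iSup_le fun n => mul_measure_le_of_forall_closedBall_of_le hτ hN
    fun x hx => ⟨hr_pos x hx.1, hx.2, hr x hx.1⟩

end Besicovitch

section Cube

variable {d : ℕ}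

theorem cube_eq_preimage_closedBall (c : EuclideanSpace ℝ (Fin d)) {r : ℝ} (hr : 0 ≤ r) :
    cube c r = (MeasurableEquiv.toLp 2 (Fin d → ℝ)).symm ⁻¹'
      closedBall ((MeasurableEquiv.toLp 2 (Fin d → ℝ)).symm c) r := by
  ext y
  simp [cube, dist_pi_le_iff hr, Real.dist_eq]

theorem measurableSet_cube (c : EuclideanSpace ℝ (Fin d)) (r : ℝ) :
    MeasurableSet (cube c r) := by
  simp only [cube, ofPred_forall]
  exact MeasurableSet.iInter fun i => measurableSet_le (by fun_prop) measurable_const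

theorem exists_cube_mul_lintegral_lt_of_lt_cmaximal {g h : EuclideanSpace ℝ (Fin d) → ℝ}
    {x : EuclideanSpace ℝ (Fin d)} {L : ℝ≥0∞} (hx : L * cmaximal g x < cmaximal h x) :
    ∃ r > 0, L * ∫⁻ y in cube x r, (‖g y‖₊ : ℝ≥0∞) <
      ∫⁻ y in cube x r, (‖h y‖₊ : ℝ≥0∞) := by
  obtain ⟨r, hr, hlt⟩ : ∃ r > 0, L * cmaximal g x <
      (∫⁻ y in cube x r, (‖h y‖₊ : ℝ≥0∞)) / volume (cube x r) := by
    simpa only [cmaximal, lt_iSup_iff, exists_prop] using hx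
  refine ⟨r, hr, lt_of_not_ge fun hle => hlt.not_ge ?_⟩
  calc (∫⁻ y in cube x r, (‖h y‖₊ : ℝ≥0∞)) / volume (cube x r)
      ≤ L * (∫⁻ y in cube x r, (‖g y‖₊ : ℝ≥0∞)) / volume (cube x r) := by gcongr
    _ = L * ((∫⁻ y in cube x r, (‖g y‖₊ : ℝ≥0∞)) / volume (cube x r)) :=
        mul_div_assoc ..
    _ ≤ L * cmaximal g x := by
        gcongr; exact le_iSup₂_of_le (f := fun r (_ : 0 < r) => _) r hr le_rfl

end Cube

theorem exists_mul_measure_le_of_forall_cube (d : ℕ) :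
    ∃ N : ℕ, ∀ (ν : Measure (EuclideanSpace ℝ (Fin d)))
      (g : EuclideanSpace ℝ (Fin d) → ℝ≥0∞) (L : ℝ≥0∞) (s : Set (EuclideanSpace ℝ (Fin d))),
      (∀ x ∈ s, ∃ r > 0, L * ν (cube x r) ≤ ∫⁻ y in cube x r, g y ∂ν) →
      L * ν s ≤ N * ∫⁻ y, g y ∂ν := by
  obtain ⟨N, τ, hτ, hN⟩ := HasBesicovitchCovering.no_satelliteConfig (α := Fin d → ℝ)
  refine ⟨N, fun ν g L s hs => ?_⟩
  set e := (MeasurableEquiv.toLp 2 (Fin d → ℝ)).symm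
  have hball {z : Fin d → ℝ} {r : ℝ} (hr : 0 ≤ r) :
      e ⁻¹' closedBall z r = cube (e.symm z) r := by
    rw [cube_eq_preimage_closedBall _ hr, e.apply_symm_apply]
  have key := Besicovitch.mul_measure_le_of_forall_closedBall hτ hN (μ := ν.map e)
    (g := g ∘ e.symm) (s := e.symm ⁻¹' s) fun z hz => by
      obtain ⟨r, hr, hle⟩ := hs _ hz
      refine ⟨r, hr, ?_⟩
      rwa [e.map_apply, e.restrict_map, lintegral_map_equiv, hball hr.le]
  rwa [e.map_apply, lintegral_map_equiv] at key

section Weighted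

variable {α : Type*} [MeasurableSpace α] {μ : Measure α} {v : α → ℝ}

theorem withDensity_ofReal_apply_eq_setLIntegral_nnnorm [SFinite μ] (hv : 0 ≤ v)
    (s : Set α) :
    μ.withDensity (fun x => ENNReal.ofReal (v x)) s = ∫⁻ y in s, (‖v y‖₊ : ℝ≥0∞) ∂μ := by
  rw [withDensity_apply']
  congr with y
  exact (Real.enorm_eq_ofReal (hv y)).symm

theorem setLIntegral_nnnorm_withDensity_ofReal (hv : 0 ≤ v) (hv_meas : AEMeasurable v μ)
    {f : α → ℝ} (hf : AEMeasurable f μ) {s : Set α} (hs : MeasurableSet s) :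
    ∫⁻ y in s, (‖f y‖₊ : ℝ≥0∞) ∂μ.withDensity (fun x => ENNReal.ofReal (v x)) =
      ∫⁻ y in s, (‖f y * v y‖₊ : ℝ≥0∞) ∂μ := by
  rw [setLIntegral_withDensity_eq_lintegral_mul₀ hv_meas.ennreal_ofReal
    hf.nnnorm.coe_nnreal_ennreal hs]
  congr with y
  rw [Pi.mul_apply, nnnorm_mul, ENNReal.coe_mul, mul_comm]
  exact congrArg _ (Real.enorm_eq_ofReal (hv y)).symm

end Weighted

theorem exists_cube_withDensity_lt_of_lt_cmaximal {d : ℕ}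
    {v f : EuclideanSpace ℝ (Fin d) → ℝ} (hv : 0 ≤ v) (hv_meas : AEMeasurable v)
    (hf : AEMeasurable f) {x : EuclideanSpace ℝ (Fin d)} {L : ℝ≥0∞}
    (hx : L * cmaximal v x < cmaximal (fun y => f y * v y) x) :
    ∃ r > 0, L * volume.withDensity (fun y => ENNReal.ofReal (v y)) (cube x r) <
      ∫⁻ y in cube x r, (‖f y‖₊ : ℝ≥0∞)
        ∂volume.withDensity (fun y => ENNReal.ofReal (v y)) := by
  obtain ⟨r, hr, hlt⟩ := exists_cube_mul_lintegral_lt_of_lt_cmaximal hx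
  refine ⟨r, hr, ?_⟩
  rwa [withDensity_ofReal_apply_eq_setLIntegral_nnnorm hv,
    setLIntegral_nnnorm_withDensity_ofReal hv hv_meas hf (measurableSet_cube x r)]

theorem ENNReal.le_ofReal_div_mul_of_ofReal_mul_le {a c : ℝ≥0∞} {b lam : ℝ} (hlam : 0 < lam)
    (h : ENNReal.ofReal lam * a ≤ ENNReal.ofReal b * c) : a ≤ ENNReal.ofReal (b / lam) * c := by
  rw [ENNReal.ofReal_div_of_pos hlam, div_eq_mul_inv, mul_right_comm, ← div_eq_mul_inv,
    ENNReal.le_div_iff_mul_le (.inl (ENNReal.ofReal_pos.2 hlam).ne') (.inl ENNReal.ofReal_ne_top),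
    mul_comm]
  exact h

theorem weak_type_centered_maximal_quotient_general
    (d : ℕ) :
    ∃ b : ℝ, 0 < b ∧
      ∀ v : EuclideanSpace ℝ (Fin d) → ℝ, 0 ≤ v → LocallyIntegrable v volume →
        ¬ (v =ᵐ[volume] 0) →
        ∀ f : EuclideanSpace ℝ (Fin d) → ℝ, Measurable f →
        (∫⁻ x, (‖f x‖₊ : ℝ≥0∞) * ENNReal.ofReal (v x)) < ∞ →
        ∀ lam : ℝ, 0 < lam →
        (∫⁻ x in {x | ENNReal.ofReal lam * cmaximal v x < cmaximal (fun y => f y * v y) x},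
            ENNReal.ofReal (v x))
          ≤ ENNReal.ofReal (b / lam) * ∫⁻ x, (‖f x‖₊ : ℝ≥0∞) * ENNReal.ofReal (v x) := by
  obtain ⟨N, hN⟩ := exists_mul_measure_le_of_forall_cube d
  refine ⟨N + 1, by positivity, fun v hv hloc _ f hf _ lam hlam => ?_⟩
  have hv_meas : AEMeasurable v := hloc.aestronglyMeasurable.aemeasurable
  have hweak := hN _ (fun y => ‖f y‖₊) (ENNReal.ofReal lam)
    {x | ENNReal.ofReal lam * cmaximal v x < cmaximal (fun y => f y * v y) x} fun x hx =>
      (exists_cube_withDensity_lt_of_lt_cmaximal hv hv_meas hf.aemeasurable hx).imp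
        fun _ ⟨hr, hlt⟩ => ⟨hr, hlt.le⟩
  rw [withDensity_apply', lintegral_withDensity_eq_lintegral_mul₀ hv_meas.ennreal_ofReal
    hf.aemeasurable.nnnorm.coe_nnreal_ennreal] at hweak
  simp only [Pi.mul_apply, fun x => mul_comm (ENNReal.ofReal (v x)) (‖f x‖₊ : ℝ≥0∞)]
    at hweak
  refine ENNReal.le_ofReal_div_mul_of_ofReal_mul_le hlam (hweak.trans ?_)
  gcongr
  rw [← ENNReal.ofReal_natCast]
  exact ENNReal.ofReal_le_ofReal (by linarith)

/-- **Weak (1,1) bound for `S̃_v f = M̃(fv)/M̃v` with constant independent of `v`.**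
There is a Besicovitch constant `b_d > 0` such that for every weight `v` (not a.e.
zero), every `f ∈ L¹(v)` and every `λ > 0`,
`v({M̃(fv) > λ M̃v}) ≤ (b_d/λ) ∫ |f| v`. -/
theorem weak_type_centered_maximal_quotient
    (d : ℕ) (hd : 1 ≤ d) :
    ∃ b : ℝ, 0 < b ∧
      ∀ v : EuclideanSpace ℝ (Fin d) → ℝ, 0 ≤ v → LocallyIntegrable v volume →
        ¬ (v =ᵐ[volume] 0) →
        ∀ f : EuclideanSpace ℝ (Fin d) → ℝ, Measurable f →
        (∫⁻ x, (‖f x‖₊ : ℝ≥0∞) * ENNReal.ofReal (v x)) < ∞ →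
        ∀ lam : ℝ, 0 < lam →
        (∫⁻ x in {x | ENNReal.ofReal lam * cmaximal v x < cmaximal (fun y => f y * v y) x},
            ENNReal.ofReal (v x))
          ≤ ENNReal.ofReal (b / lam) * ∫⁻ x, (‖f x‖₊ : ℝ≥0∞) * ENNReal.ofReal (v x) :=
  weak_type_centered_maximal_quotient_general d
end
end

section
/- Let w be a weight on ℝ^d and let f be a locally integrable function with supp f ⊆ supp w. Then for every x ∈ ℝ^d one has the pointwise inequality M̃f(x) ≤ M̃w(x) · M̃_w(f w^{−1})(x), where M̃_w g(x) = sup over R > 0 with w(Q(x,R)) > 0 of (1/w(Q(x,R))) ∫_{Q(x,R)} |g(y)| w(y) dy, and f w^{−1} is interpreted as 0 at points where w vanishes. -/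
open MeasureTheory Filter Set Metric
open scoped ENNReal Topology NNReal

noncomputable section

/-- The centered maximal operator associated to a weight `w`: the supremum of
`w`-averages of `|g|` over centered cubes of positive `w`-measure. -/
def wcmaximal {d : ℕ} (w g : EuclideanSpace ℝ (Fin d) → ℝ)
    (x : EuclideanSpace ℝ (Fin d)) : ℝ≥0∞ :=
  ⨆ (r : ℝ) (_ : 0 < r) (_ : 0 < ∫⁻ y in cube x r, ENNReal.ofReal (w y)),
    (∫⁻ y in cube x r, (‖g y‖₊ : ℝ≥0∞) * ENNReal.ofReal (w y)) /
      (∫⁻ y in cube x r, ENNReal.ofReal (w y))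

/-!
Since `supp f ⊆ supp w`, we have `|f| = |f w⁻¹| w` pointwise, so on a cube `Q` centred at `x`
the average of `|f|` factors as `(w(Q) / |Q|) · (w(Q)⁻¹ ∫_Q |f w⁻¹| w)`; the first factor is at
most `M̃w(x)` and the second at most `M̃_w(f w⁻¹)(x)`. The factorisation needs `w(Q) < ∞`, which
is local integrability of `w`, and cubes with `w(Q) = 0` are harmless because `f = 0` a.e. on them.
-/

lemma isCompact_cube {d : ℕ} (c : EuclideanSpace ℝ (Fin d)) (r : ℝ) : IsCompact (cube c r) := by
  have hcube : cube c r =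
      EuclideanSpace.equiv (Fin d) ℝ ⁻¹' univ.pi fun i => Icc (c i - r) (c i + r) := by
    ext y
    change (∀ i, |y i - c i| ≤ r) ↔ ∀ i ∈ univ, y i ∈ Icc (c i - r) (c i + r)
    simp only [mem_univ, true_imp_iff, abs_sub_comm (y _), mem_Icc_iff_abs_le]
  rw [hcube]
  exact (EuclideanSpace.equiv (Fin d) ℝ).toHomeomorph.isCompact_preimage.2
    (isCompact_univ_pi fun _ => isCompact_Icc)

lemma coe_nnnorm_eq_nnnorm_div_mul_ofReal {a b : ℝ} (hb : 0 ≤ b) (hab : b = 0 → a = 0) :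
    (‖a‖₊ : ℝ≥0∞) = ‖a / b‖₊ * ENNReal.ofReal b := by
  rcases eq_or_ne b 0 with rfl | hb0
  · simp [hab rfl]
  · rw [← Real.enorm_eq_ofReal hb, enorm_eq_nnnorm, ← ENNReal.coe_mul, ← nnnorm_mul,
      div_mul_cancel₀ a hb0]

lemma lintegral_mul_ofReal_eq_zero {α : Type*} [MeasurableSpace α] {μ : Measure α}
    {w : α → ℝ} (hw : AEMeasurable w μ) (g : α → ℝ≥0∞)
    (h : ∫⁻ y, ENNReal.ofReal (w y) ∂μ = 0) : ∫⁻ y, g y * ENNReal.ofReal (w y) ∂μ = 0 := by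
  have hw_ae : (fun y => ENNReal.ofReal (w y)) =ᵐ[μ] 0 :=
    (lintegral_eq_zero_iff' hw.ennreal_ofReal).1 h
  have hgw_ae : (fun y => g y * ENNReal.ofReal (w y)) =ᵐ[μ] 0 := by
    filter_upwards [hw_ae] with y hy
    simp only [hy, Pi.zero_apply, mul_zero]
  rw [lintegral_congr_ae hgw_ae, lintegral_zero_fun]

section Cube

variable {d : ℕ} {x : EuclideanSpace ℝ (Fin d)} {r : ℝ}

lemma average_le_cmaximal (f : EuclideanSpace ℝ (Fin d) → ℝ) (hr : 0 < r) :
    (∫⁻ y in cube x r, (‖f y‖₊ : ℝ≥0∞)) / volume (cube x r) ≤ cmaximal f x :=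
  le_iSup₂_of_le r hr le_rfl

lemma weightedAverage_le_wcmaximal {w : EuclideanSpace ℝ (Fin d) → ℝ}
    (hw : AEMeasurable w (volume.restrict (cube x r))) (g : EuclideanSpace ℝ (Fin d) → ℝ)
    (hr : 0 < r) :
    (∫⁻ y in cube x r, (‖g y‖₊ : ℝ≥0∞) * ENNReal.ofReal (w y)) /
      (∫⁻ y in cube x r, ENNReal.ofReal (w y)) ≤ wcmaximal w g x := by
  rcases eq_zero_or_pos (∫⁻ y in cube x r, ENNReal.ofReal (w y)) with hA | hA
  · rw [lintegral_mul_ofReal_eq_zero hw _ hA, ENNReal.zero_div]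
    exact zero_le
  · exact le_iSup_of_le r (le_iSup_of_le hr (le_iSup_of_le hA le_rfl))

end Cube

theorem cmaximal_le_cmaximal_mul_wcmaximal_general
    (d : ℕ) (w f : EuclideanSpace ℝ (Fin d) → ℝ)
    (hw0 : 0 ≤ w) (hw : LocallyIntegrable w volume)
    (hsupp : Function.support f ⊆ Function.support w)
    (x : EuclideanSpace ℝ (Fin d)) :
    cmaximal f x ≤ cmaximal w x * wcmaximal w (fun y => f y / w y) x := by
  refine iSup₂_le fun r hr => ?_
  have hwQ : IntegrableOn w (cube x r) := hw.integrableOn_isCompact (isCompact_cube x r)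
  set A := ∫⁻ y in cube x r, ENNReal.ofReal (w y)
  set I := ∫⁻ y in cube x r, (‖f y / w y‖₊ : ℝ≥0∞) * ENNReal.ofReal (w y)
  have hf_eq : ∫⁻ y in cube x r, (‖f y‖₊ : ℝ≥0∞) = I := lintegral_congr fun y =>
    coe_nnnorm_eq_nnnorm_div_mul_ofReal (hw0 y) fun h =>
      Function.notMem_support.1 fun hf => hsupp hf h
  have hw_eq : ∫⁻ y in cube x r, (‖w y‖₊ : ℝ≥0∞) = A :=
    lintegral_congr fun y => Real.enorm_eq_ofReal (hw0 y)
  have hI : A = 0 → I = 0 := lintegral_mul_ofReal_eq_zero hwQ.aemeasurable _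
  calc (∫⁻ y in cube x r, (‖f y‖₊ : ℝ≥0∞)) / volume (cube x r)
      = A / volume (cube x r) * (I / A) := by
        rw [hf_eq, div_eq_mul_inv A, mul_right_comm,
          ENNReal.mul_div_cancel' hI (absurd · hwQ.lintegral_lt_top.ne), ← div_eq_mul_inv]
    _ ≤ cmaximal w x * wcmaximal w (fun y => f y / w y) x :=
        mul_le_mul' (hw_eq ▸ average_le_cmaximal w hr)
          (weightedAverage_le_wcmaximal hwQ.aemeasurable _ hr)

/-- **Pointwise domination `M̃f ≤ M̃w ⋅ M̃_w(f w⁻¹)`** for `f` supported in the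
support of the weight `w`, where `f w⁻¹` is interpreted as `0` where `w` vanishes. -/
theorem cmaximal_le_cmaximal_mul_wcmaximal
    (d : ℕ) (w f : EuclideanSpace ℝ (Fin d) → ℝ)
    (hw0 : 0 ≤ w) (hw : LocallyIntegrable w volume)
    (hf : LocallyIntegrable f volume)
    (hsupp : Function.support f ⊆ Function.support w)
    (x : EuclideanSpace ℝ (Fin d)) :
    cmaximal f x ≤ cmaximal w x * wcmaximal w (fun y => f y / w y) x :=
  cmaximal_le_cmaximal_mul_wcmaximal_general d w f hw0 hw hsupp x
end
end
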